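/- Let N be a positive integer, let A, A' ⊆ [N] be nonempty subsets with A ≠ A' and |A| = |A'|, and let δ ≥ 1 be a real number with δ·|A| ≤ N−1. If |f_δ(A)| − |A| ≤ δ − 1, then the interval [A, f_δ(A)] does not intersect the interval [A', f_δ(A')]. -/
import Mathlib


/-- The point of the circular representation of `[N] = {1, …, N}` reached from the
point `x` after `t` clockwise steps. -/
def cpt (N x t : ℕ) : ℕ := (x - 1 + t) % N + 1

/-- The block of `len` clockwise-consecutive points of the circular representation
of `[N]` starting at the point `x`. -/
def cblock (N x len : ℕ) : Finset ℕ := (Finset.range len).image (cpt N x)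

lemma mem_cblock {N x len y : ℕ} : y ∈ cblock N x len ↔ ∃ u < len, cpt N x u = y := by
  simp [cblock, Finset.mem_image, Finset.mem_range]

lemma cpt_mem_Icc {N : ℕ} (hN : 0 < N) (x t : ℕ) : cpt N x t ∈ Finset.Icc 1 N := by
  simp only [cpt, Finset.mem_Icc]
  have := Nat.mod_lt (x - 1 + t) hN
  omega

lemma cpt_cpt (N x t s : ℕ) : cpt N (cpt N x t) s = cpt N x (t + s) := by
  simp only [cpt, Nat.add_sub_cancel, Nat.mod_add_mod]
  ring_nf

lemma cpt_zero {N x : ℕ} (h1 : 1 ≤ x) (h2 : x ≤ N) : cpt N x 0 = x := by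
  simp only [cpt, Nat.add_zero]
  rw [Nat.mod_eq_of_lt (by omega)]
  omega

lemma cpt_inj {N x t s : ℕ} (ht : t < N) (hs : s < N) (h : cpt N x t = cpt N x s) : t = s := by
  simp only [cpt] at h
  have h' : x - 1 + t ≡ x - 1 + s [MOD N] := by
    unfold Nat.ModEq; omega
  have := Nat.ModEq.add_left_cancel' (x - 1) h'
  unfold Nat.ModEq at this
  rwa [Nat.mod_eq_of_lt ht, Nat.mod_eq_of_lt hs] at this

lemma card_cblock {N x len : ℕ} (h : len ≤ N) : (cblock N x len).card = len := by
  rw [cblock, Finset.card_image_of_injOn, Finset.card_range]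
  intro t ht s hs hts
  simp only [Finset.coe_range, Set.mem_Iio] at ht hs
  exact cpt_inj (lt_of_lt_of_le ht h) (lt_of_lt_of_le hs h) hts

lemma cblock_split (N x t s : ℕ) :
    cblock N x (t + s) = cblock N x t ∪ cblock N (cpt N x t) s := by
  ext y
  simp only [Finset.mem_union, mem_cblock, cpt_cpt]
  constructor
  · rintro ⟨u, hu, rfl⟩
    rcases lt_or_ge u t with h | h
    · exact Or.inl ⟨u, h, rfl⟩
    · exact Or.inr ⟨u - t, by omega, by rw [show t + (u - t) = u by omega]⟩
  · rintro (⟨u, hu, rfl⟩ | ⟨u, hu, rfl⟩)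
    · exact ⟨u, by omega, rfl⟩
    · exact ⟨t + u, by omega, rfl⟩

lemma cblock_eq_of_ge {N x len : ℕ} (hN : 0 < N) (h : N ≤ len) :
    cblock N x len = cblock N x N := by
  ext y
  simp only [mem_cblock]
  constructor
  · rintro ⟨u, hu, rfl⟩
    exact ⟨u % N, Nat.mod_lt _ hN, by simp [cpt, Nat.add_mod_mod]⟩
  · rintro ⟨u, hu, rfl⟩
    exact ⟨u, by omega, rfl⟩

lemma inter_prefix {N a b len L : ℕ} (hN : 0 < N) (ha1 : 1 ≤ a) (haN : a ≤ N)
    (hb1 : 1 ≤ b) (hbN : b ≤ N) (hL : L ≤ N) (ha : a ∉ cblock N b len) :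
    ∃ t ≤ len, cblock N a L ∩ cblock N b len = cblock N b t := by
  rcases Nat.eq_zero_or_pos len with h0 | hlen
  · exact ⟨0, by omega, by simp [h0, cblock]⟩
  set d := (b + N - a) % N with hd
  have hdN : d < N := Nat.mod_lt _ hN
  have hcb : cpt N a d = b := by
    simp only [cpt, hd]
    rw [Nat.add_mod, Nat.mod_mod_of_dvd _ (dvd_refl N), ← Nat.add_mod]
    have h1 : a - 1 + (b + N - a) = b - 1 + N := by omega
    rw [h1, Nat.add_mod_right, Nat.mod_eq_of_lt (by omega)]
    omega
  have hbu : ∀ u, cpt N b u = cpt N a (d + u) := by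
    intro u; rw [← hcb, cpt_cpt]
  have hd0 : 0 < d := by
    rcases Nat.eq_zero_or_pos d with h | h
    · exfalso
      apply ha
      rw [mem_cblock]
      refine ⟨0, hlen, ?_⟩
      have hba : b = a := by
        rw [← hcb, h, cpt_zero ha1 haN]
      rw [cpt_zero hb1 hbN, hba]
    · exact h
  have hdlen : d + len ≤ N := by
    by_contra hcon
    push_neg at hcon
    apply ha
    rw [mem_cblock]
    refine ⟨N - d, by omega, ?_⟩
    rw [hbu, show d + (N - d) = N by omega]
    have : cpt N a N = cpt N a 0 := by
      simp [cpt, Nat.add_mod_right]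
    rw [this, cpt_zero ha1 haN]
  refine ⟨min len (L - d), Nat.min_le_left _ _, ?_⟩
  ext y
  simp only [Finset.mem_inter, mem_cblock]
  constructor
  · rintro ⟨⟨s, hs, rfl⟩, ⟨u, hu, hy⟩⟩
    have heq : cpt N a s = cpt N a (d + u) := by rw [← hbu, hy]
    have hsdu : s = d + u := cpt_inj (by omega) (by omega) heq
    exact ⟨u, by omega, hy⟩
  · rintro ⟨u, hu, rfl⟩
    refine ⟨⟨d + u, by omega, ?_⟩, ⟨u, by omega, rfl⟩⟩
    rw [← hbu]

/-- Data describing a candidate block structure on the circular representation of a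
set `[N]`: the number `p` of blocks, the first (clockwise) element `b i` of the `i`-th
block `B i`, the length `lenB i` of `B i`, and the length `lenG i` of the gap `G i`
following `B i` clockwise (only the indices `i < p` are relevant). -/
structure CircData where
  p : ℕ
  b : ℕ → ℕ
  lenB : ℕ → ℕ
  lenG : ℕ → ℕ

/-- The `i`-th block `B i` of the data `S` on the circular representation of `[N]`. -/
def CircData.Blk (S : CircData) (N i : ℕ) : Finset ℕ := cblock N (S.b i) (S.lenB i)

/-- The `i`-th gap `G i` of the data `S`, which follows the block `B i` clockwise. -/
def CircData.Gap (S : CircData) (N i : ℕ) : Finset ℕ :=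
  cblock N (cpt N (S.b i) (S.lenB i)) (S.lenG i)

/-- `S` describes the block structure `B_1, G_1, B_2, G_2, …, B_p, G_p` of the set `A`
with respect to the density `δ` on the circular representation of `[N]`. -/
def IsBlockStructure (N : ℕ) (A : Finset ℕ) (δ : ℝ) (S : CircData) : Prop :=
  0 < S.p ∧
  -- each block is nonempty (it contains its first element `b i`)
  (∀ i < S.p, 0 < S.lenB i) ∧
  -- the blocks and gaps are arranged consecutively clockwise, cyclically
  (∀ i, i + 1 < S.p → S.b (i + 1) = cpt N (S.b i) (S.lenB i + S.lenG i)) ∧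
  S.b 0 = cpt N (S.b (S.p - 1)) (S.lenB (S.p - 1) + S.lenG (S.p - 1)) ∧
  -- the blocks and gaps form a partition of `[N]`
  ((Finset.range S.p).biUnion (fun i => S.Blk N i ∪ S.Gap N i) = Finset.Icc 1 N) ∧
  (∀ i < S.p, ∀ j < S.p, i ≠ j →
    Disjoint (S.Blk N i ∪ S.Gap N i) (S.Blk N j ∪ S.Gap N j)) ∧
  (∀ i < S.p, Disjoint (S.Blk N i) (S.Gap N i)) ∧
  -- (i) the first (clockwise) element of each block belongs to `A`
  (∀ i < S.p, S.b i ∈ A) ∧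
  -- (ii) the gaps are disjoint from `A`
  (∀ i < S.p, ∀ x ∈ S.Gap N i, x ∉ A) ∧
  -- (iii) `δ·|A ∩ B i| − 1 < |B i| ≤ δ·|A ∩ B i|`
  (∀ i < S.p, δ * ((A ∩ S.Blk N i).card : ℝ) - 1 < ((S.Blk N i).card : ℝ) ∧
    ((S.Blk N i).card : ℝ) ≤ δ * ((A ∩ S.Blk N i).card : ℝ)) ∧
  -- (iv) every proper initial segment `[b i, y] ⊊ B i` satisfies
  -- `|[b i, y]| + 1 ≤ δ·|[b i, y] ∩ A|`
  (∀ i < S.p, ∀ t, 0 < t → t < S.lenB i →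
    ((cblock N (S.b i) t).card : ℝ) + 1 ≤ δ * ((cblock N (S.b i) t ∩ A).card : ℝ))

/-- The union `𝒢_δ(A) = G_1 ∪ ⋯ ∪ G_p` of the gaps of the block structure `S`. -/
def CircData.gapsUnion (S : CircData) (N : ℕ) : Finset ℕ :=
  (Finset.range S.p).biUnion (S.Gap N)

/-- `f_δ(A) = A ∪ 𝒢_δ(A)`, computed from the block structure `S` of `A` on `[N]`. -/
def fdelta (A : Finset ℕ) (S : CircData) (N : ℕ) : Finset ℕ := A ∪ S.gapsUnion N

/-- Lemma 3.1 of Keller–Shen–Streib–Young. If `A ≠ A'` are nonempty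
subsets of `[N]` of the same cardinality, `1 ≤ δ`, `δ·|A| ≤ N−1` and
`|f_δ(A)| − |A| ≤ δ − 1`, then the intervals `[A, f_δ(A)]` and `[A', f_δ(A')]`
do not intersect. -/
theorem interval_disjoint_same_density
    (N : ℕ) (hN : 0 < N) (A A' : Finset ℕ)
    (hA : A ⊆ Finset.Icc 1 N) (hA' : A' ⊆ Finset.Icc 1 N)
    (hAne : A.Nonempty) (hA'ne : A'.Nonempty)
    (hne : A ≠ A') (hcard : A.card = A'.card)
    (δ : ℝ) (hδ1 : 1 ≤ δ) (hδ2 : δ * (A.card : ℝ) ≤ (N : ℝ) - 1)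
    (S S' : CircData)
    (hS : IsBlockStructure N A δ S) (hS' : IsBlockStructure N A' δ S')
    (hgap : ((fdelta A S N).card : ℝ) - (A.card : ℝ) ≤ δ - 1) :
    ∀ C : Finset ℕ,
      ¬(A ⊆ C ∧ C ⊆ fdelta A S N ∧ A' ⊆ C ∧ C ⊆ fdelta A' S' N) := by
  rintro C ⟨hAC, hCfA, hA'C, hCfA'⟩
  have hδ0 : (0:ℝ) ≤ δ := by linarith
  obtain ⟨_, hBpos, _, _, hpart, hdisjS, hBGdisj, hbA, hgapA, hiiiS, hivS⟩ := hS
  obtain ⟨_, hBpos', _, _, hpart', hdisjS', hBGdisj', hbA', hgapA', hiiiS', hivS'⟩ := hS'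
  -- a' ∈ A' \ A
  have hnsub : ¬ A' ⊆ A := by
    intro h
    exact hne (Finset.eq_of_subset_of_card_le h (le_of_eq hcard)).symm
  obtain ⟨a', ha'A', ha'A⟩ := Finset.not_subset.mp hnsub
  have ha'I : a' ∈ Finset.Icc 1 N := hA' ha'A'
  have ha'1 : 1 ≤ a' := (Finset.mem_Icc.mp ha'I).1
  have ha'N : a' ≤ N := (Finset.mem_Icc.mp ha'I).2
  -- a' lies in the gaps of S
  have ha'G : a' ∈ S.gapsUnion N := by
    have := hCfA (hA'C ha'A')
    rcases Finset.mem_union.mp this with h | h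
    · exact absurd h ha'A
    · exact h
  -- a' lies in some block of S'
  have ha'B : ∃ j < S'.p, a' ∈ S'.Blk N j := by
    have h1 : a' ∈ (Finset.range S'.p).biUnion (fun i => S'.Blk N i ∪ S'.Gap N i) := by
      rw [hpart']; exact ha'I
    obtain ⟨j, hj, hmem⟩ := Finset.mem_biUnion.mp h1
    have hj' := Finset.mem_range.mp hj
    rcases Finset.mem_union.mp hmem with h | h
    · exact ⟨j, hj', h⟩
    · exact absurd ha'A' (hgapA' j hj' a' h)
  obtain ⟨j, hj, ha'Bj⟩ := ha'B
  obtain ⟨t0, ht0, ha'eq⟩ := mem_cblock.mp ha'Bj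
  -- lenB' j ≤ N
  have hBjcard : ((S'.Blk N j).card : ℝ) ≤ (N : ℝ) - 1 := by
    refine le_trans (hiiiS' j hj).2 ?_
    have h1 : ((A' ∩ S'.Blk N j).card : ℝ) ≤ (A'.card : ℝ) := by
      exact_mod_cast Finset.card_le_card Finset.inter_subset_left
    calc δ * ((A' ∩ S'.Blk N j).card : ℝ) ≤ δ * (A'.card : ℝ) :=
          mul_le_mul_of_nonneg_left h1 hδ0
      _ = δ * (A.card : ℝ) := by rw [hcard]
      _ ≤ (N : ℝ) - 1 := hδ2
  have hlenBj : S'.lenB j ≤ N := by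
    by_contra hcon
    push_neg at hcon
    rw [CircData.Blk, cblock_eq_of_ge hN (le_of_lt hcon), card_cblock (le_refl N)] at hBjcard
    have : (1:ℝ) ≤ (N:ℝ) := by exact_mod_cast hN
    linarith
  set L := S'.lenB j - t0 with hLdef
  have hL1 : 0 < L := by omega
  have hLN : L ≤ N := by omega
  set Sf := cblock N a' L with hSfdef
  have hbj1 : 1 ≤ S'.b j := (Finset.mem_Icc.mp (hA' (hbA' j hj))).1
  have hbjN : S'.b j ≤ N := (Finset.mem_Icc.mp (hA' (hbA' j hj))).2
  have hsplit : S'.Blk N j = cblock N (S'.b j) t0 ∪ Sf := by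
    rw [CircData.Blk, show S'.lenB j = t0 + L by omega, cblock_split, ha'eq]
  set P := cblock N (S'.b j) t0 with hPdef
  have hPSdisj : Disjoint P Sf := by
    rw [Finset.disjoint_left]
    intro y hyP hyS
    obtain ⟨u, hu, huy⟩ := mem_cblock.mp hyP
    obtain ⟨v, hv, hvy⟩ := mem_cblock.mp hyS
    rw [← ha'eq, cpt_cpt] at hvy
    have : u = t0 + v := cpt_inj (by omega) (by omega) (huy.trans hvy.symm)
    omega
  have hSub : Sf ⊆ S'.Blk N j := by rw [hsplit]; exact Finset.subset_union_right
  -- A ∩ Sf ⊆ A' ∩ Sf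
  have hAA' : A ∩ Sf ⊆ A' ∩ Sf := by
    intro x hx
    obtain ⟨hxA, hxS⟩ := Finset.mem_inter.mp hx
    refine Finset.mem_inter.mpr ⟨?_, hxS⟩
    have hxf := hCfA' (hAC hxA)
    rcases Finset.mem_union.mp hxf with h | h
    · exact h
    · exfalso
      obtain ⟨m, hm, hGm⟩ := Finset.mem_biUnion.mp h
      have hm' := Finset.mem_range.mp hm
      have hxB : x ∈ S'.Blk N j := hSub hxS
      by_cases hjm : j = m
      · subst hjm
        exact Finset.disjoint_left.mp (hBGdisj' j hj) hxB hGm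
      · exact Finset.disjoint_left.mp (hdisjS' j hj m hm' hjm)
          (Finset.mem_union_left _ hxB) (Finset.mem_union_right _ hGm)
  have ha'Sf : a' ∈ Sf := by
    rw [hSfdef, mem_cblock]
    exact ⟨0, hL1, cpt_zero ha'1 ha'N⟩
  have hcardAA' : (A ∩ Sf).card + 1 ≤ (A' ∩ Sf).card := by
    have hss : A ∩ Sf ⊂ A' ∩ Sf := by
      refine ⟨hAA', fun h => ?_⟩
      have := h (Finset.mem_inter.mpr ⟨ha'A', ha'Sf⟩)
      exact ha'A (Finset.mem_inter.mp this).1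
    exact Finset.card_lt_card hss
  -- lower bound : δ * |A' ∩ Sf| - 1 < |Sf|
  have hlow : δ * ((A' ∩ Sf).card : ℝ) - 1 < ((Sf).card : ℝ) := by
    rcases Nat.eq_zero_or_pos t0 with h0 | ht0pos
    · have hSB : Sf = S'.Blk N j := by
        rw [hsplit, hPdef, h0]
        simp [cblock]
      rw [hSB]
      exact (hiiiS' j hj).1
    · have hiv' := hivS' j hj t0 ht0pos ht0
      have hiii' := (hiiiS' j hj).1
      have hcs : (S'.Blk N j).card = P.card + Sf.card := by
        rw [hsplit, Finset.card_union_of_disjoint hPSdisj]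
      have his : (A' ∩ S'.Blk N j).card = (A' ∩ P).card + (A' ∩ Sf).card := by
        rw [hsplit, Finset.inter_union_distrib_left,
          Finset.card_union_of_disjoint
            (hPSdisj.mono Finset.inter_subset_right Finset.inter_subset_right)]
      rw [Finset.inter_comm] at hiv'
      rw [hcs, his] at hiii'
      push_cast at hiii' hiv' ⊢
      linarith
  -- a' not in any block of S
  have ha'notB : ∀ i < S.p, a' ∉ S.Blk N i := by
    intro i hi hmem
    obtain ⟨m, hm, hGm⟩ := Finset.mem_biUnion.mp ha'G
    have hm' := Finset.mem_range.mp hm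
    by_cases him : i = m
    · subst him
      exact Finset.disjoint_left.mp (hBGdisj i hi) hmem hGm
    · exact Finset.disjoint_left.mp (hdisjS i hi m hm' him)
        (Finset.mem_union_left _ hmem) (Finset.mem_union_right _ hGm)
  -- per block upper bound
  have hupB : ∀ i < S.p,
      ((Sf ∩ S.Blk N i).card : ℝ) ≤ δ * ((A ∩ (Sf ∩ S.Blk N i)).card : ℝ) := by
    intro i hi
    have hbi1 : 1 ≤ S.b i := (Finset.mem_Icc.mp (hA (hbA i hi))).1
    have hbiN : S.b i ≤ N := (Finset.mem_Icc.mp (hA (hbA i hi))).2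
    obtain ⟨t, htle, heq⟩ :=
      inter_prefix (len := S.lenB i) hN ha'1 ha'N hbi1 hbiN hLN (ha'notB i hi)
    rw [show Sf ∩ S.Blk N i = cblock N a' L ∩ cblock N (S.b i) (S.lenB i) from rfl, heq]
    rcases Nat.eq_zero_or_pos t with h0 | htpos
    · simp [h0, cblock]
    rcases eq_or_lt_of_le htle with hteq | htlt
    · subst hteq
      exact (hiiiS i hi).2
    · have := hivS i hi t htpos htlt
      rw [Finset.inter_comm]
      linarith
  -- partition of Sf
  have hSfIcc : Sf ⊆ Finset.Icc 1 N := by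
    intro y hy
    obtain ⟨u, hu, huy⟩ := mem_cblock.mp hy
    rw [← huy]; exact cpt_mem_Icc hN _ _
  have hpartSf : Sf = (Finset.range S.p).biUnion (fun i => Sf ∩ (S.Blk N i ∪ S.Gap N i)) := by
    ext y
    simp only [Finset.mem_biUnion, Finset.mem_inter, Finset.mem_range]
    constructor
    · intro hy
      have h1 : y ∈ (Finset.range S.p).biUnion (fun i => S.Blk N i ∪ S.Gap N i) := by
        rw [hpart]; exact hSfIcc hy
      obtain ⟨i, hi, hmem⟩ := Finset.mem_biUnion.mp h1
      exact ⟨i, Finset.mem_range.mp hi, hy, hmem⟩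
    · rintro ⟨i, _, hy, _⟩; exact hy
  have hcardSf : Sf.card = ∑ i ∈ Finset.range S.p, (Sf ∩ (S.Blk N i ∪ S.Gap N i)).card := by
    conv_lhs => rw [hpartSf]
    refine Finset.card_biUnion ?_
    intro x hx y hy hxy
    exact (hdisjS x (Finset.mem_range.mp hx) y (Finset.mem_range.mp hy) hxy).mono
      Finset.inter_subset_right Finset.inter_subset_right
  have hterm : ∀ i ∈ Finset.range S.p,
      (Sf ∩ (S.Blk N i ∪ S.Gap N i)).card = (Sf ∩ S.Blk N i).card + (Sf ∩ S.Gap N i).card := by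
    intro i hi
    rw [Finset.inter_union_distrib_left,
      Finset.card_union_of_disjoint
        ((hBGdisj i (Finset.mem_range.mp hi)).mono Finset.inter_subset_right
          Finset.inter_subset_right)]
  have hcardSf2 : Sf.card = (∑ i ∈ Finset.range S.p, (Sf ∩ S.Blk N i).card)
      + ∑ i ∈ Finset.range S.p, (Sf ∩ S.Gap N i).card := by
    rw [hcardSf, Finset.sum_congr rfl hterm, Finset.sum_add_distrib]
  -- gap part ≤ |gapsUnion| ≤ δ - 1
  have hgU : ((S.gapsUnion N).card : ℝ) ≤ δ - 1 := by
    have hdAG : Disjoint A (S.gapsUnion N) := by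
      rw [Finset.disjoint_left]
      intro x hxA hxG
      obtain ⟨m, hm, hGm⟩ := Finset.mem_biUnion.mp hxG
      exact hgapA m (Finset.mem_range.mp hm) x hGm hxA
    have : (fdelta A S N).card = A.card + (S.gapsUnion N).card :=
      Finset.card_union_of_disjoint hdAG
    rw [this] at hgap
    push_cast at hgap
    linarith
  have hgsum : ((∑ i ∈ Finset.range S.p, (Sf ∩ S.Gap N i).card : ℕ) : ℝ) ≤ δ - 1 := by
    refine le_trans ?_ hgU
    have h1 : ∑ i ∈ Finset.range S.p, (Sf ∩ S.Gap N i).card ≤ (S.gapsUnion N).card := by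
      rw [CircData.gapsUnion, Finset.card_biUnion ?_]
      · exact Finset.sum_le_sum fun i _ =>
          Finset.card_le_card Finset.inter_subset_right
      · intro x hx y hy hxy
        exact (hdisjS x (Finset.mem_range.mp hx) y (Finset.mem_range.mp hy) hxy).mono
          Finset.subset_union_right Finset.subset_union_right
    exact_mod_cast h1
  -- block part ≤ δ * |A ∩ Sf|
  have hbsum : ((∑ i ∈ Finset.range S.p, (Sf ∩ S.Blk N i).card : ℕ) : ℝ)
      ≤ δ * ((A ∩ Sf).card : ℝ) := by
    have h1 : ((∑ i ∈ Finset.range S.p, (Sf ∩ S.Blk N i).card : ℕ) : ℝ)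
        ≤ ∑ i ∈ Finset.range S.p, δ * ((A ∩ (Sf ∩ S.Blk N i)).card : ℝ) := by
      push_cast
      exact Finset.sum_le_sum fun i hi => hupB i (Finset.mem_range.mp hi)
    refine le_trans h1 ?_
    rw [← Finset.mul_sum]
    refine mul_le_mul_of_nonneg_left ?_ hδ0
    have h2 : ∑ i ∈ Finset.range S.p, (A ∩ (Sf ∩ S.Blk N i)).card
        ≤ (A ∩ Sf).card := by
      rw [← Finset.card_biUnion ?_]
      · refine Finset.card_le_card (Finset.biUnion_subset.mpr fun i _ => ?_)
        intro x hx
        simp only [Finset.mem_inter] at hx ⊢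
        exact ⟨hx.1, hx.2.1⟩
      · intro x hx y hy hxy
        refine (hdisjS x (Finset.mem_range.mp hx) y (Finset.mem_range.mp hy) hxy).mono ?_ ?_
        · exact (Finset.inter_subset_right.trans Finset.inter_subset_right).trans
            Finset.subset_union_left
        · exact (Finset.inter_subset_right.trans Finset.inter_subset_right).trans
            Finset.subset_union_left
    exact_mod_cast h2
  -- combine
  have hup : ((Sf).card : ℝ) ≤ δ * ((A ∩ Sf).card : ℝ) + (δ - 1) := by
    rw [hcardSf2]
    push_cast
    push_cast at hbsum hgsum
    linarith
  have hmul : δ * (((A ∩ Sf).card : ℝ) + 1) ≤ δ * ((A' ∩ Sf).card : ℝ) := by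
    refine mul_le_mul_of_nonneg_left ?_ hδ0
    exact_mod_cast hcardAA'
  nlinarith [hlow, hup, hmul]
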